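/- arXiv:2501.13760 — 6 statements merged into one kernel-verified Lean document; each statement's English description precedes it below -/
import Mathlib

section
/- Let G be a finite simple graph with no isolated vertices, having n vertices and maximum degree Δ(G). Then the total transitivity satisfies Tr_t(G) ≤ min{Δ(G), ⌊n/2⌋}. -/
/-!
A vertex of the last part is dominated by every part, so it has a neighbour in each of
the `k` parts and `k ≤ Δ(G)`. Every part dominates itself, so it contains an edge and
hence two vertices; the parts being disjoint, `2k ≤ n`.
-/

/-- A total transitive partition of `G` into `k` parts: the parts are nonempty, they
partition the vertex set, and `V_i` dominates `V_j` for all `i ≤ j` (where a set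
dominates another — possibly itself — if every vertex of the latter is adjacent to
some vertex of the former). -/
def TTPartition {V : Type*} (G : SimpleGraph V) (k : ℕ) (P : Fin k → Set V) : Prop :=
  (∀ i, (P i).Nonempty) ∧
  (∀ v : V, ∃! i, v ∈ P i) ∧
  (∀ i j : Fin k, i ≤ j → ∀ v ∈ P j, ∃ u ∈ P i, G.Adj u v)

namespace TTPartition

variable {V : Type*} {G : SimpleGraph V} {k : ℕ} {P : Fin k → Set V}

theorem eq_of_mem_of_mem (hP : TTPartition G k P) {v : V} {i j : Fin k}
    (hi : v ∈ P i) (hj : v ∈ P j) : i = j :=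
  (hP.2.1 v).unique hi hj

theorem injective_of_mem {ι : Type*} (hP : TTPartition G k P) {f : ι → V} {c : ι → Fin k}
    (hf : ∀ i, f i ∈ P (c i)) (hc : c.Injective) : f.Injective :=
  fun i j hij => hc (hP.eq_of_mem_of_mem (hf i) (hij ▸ hf j))

theorem exists_adj_mem_self (hP : TTPartition G k P) (i : Fin k) :
    ∃ u ∈ P i, ∃ v ∈ P i, G.Adj u v := by
  obtain ⟨v, hv⟩ := hP.1 i
  obtain ⟨u, hu, huv⟩ := hP.2.2 i i le_rfl v hv
  exact ⟨u, hu, v, hv, huv⟩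

theorem mul_two_le_card [Fintype V] (hP : TTPartition G k P) : k * 2 ≤ Fintype.card V := by
  choose a ha b hb hab using hP.exists_adj_mem_self
  have hinj : (Sum.elim a b).Injective := by
    refine (hP.injective_of_mem ha Function.injective_id).sumElim
      (hP.injective_of_mem hb Function.injective_id) fun i j hij => ?_
    obtain rfl := hP.eq_of_mem_of_mem (ha i) (hij ▸ hb j)
    exact (hab i).ne hij
  simpa [mul_two] using Fintype.card_le_of_injective _ hinj

theorem le_degree_of_mem [Fintype V] [DecidableRel G.Adj] (hP : TTPartition G k P)
    {j : Fin k} {v : V} (hv : v ∈ P j) : (j : ℕ) + 1 ≤ G.degree v := by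
  have hnbr : ∀ i : Fin k, ∃ u, (i ≤ j → u ∈ P i ∧ G.Adj u v) := fun i => by
    by_cases hij : i ≤ j
    · obtain ⟨u, hu, huv⟩ := hP.2.2 i j hij v hv
      exact ⟨u, fun _ => ⟨hu, huv⟩⟩
    · exact ⟨v, fun h => absurd h hij⟩
  choose g hg using hnbr
  rw [← Fin.card_Iic, ← G.card_neighborFinset_eq_degree]
  refine Finset.card_le_card_of_injOn g (fun i hi => ?_) fun i hi i' hi' h => ?_
  · exact (G.mem_neighborFinset v _).2 (hg i (Finset.mem_Iic.1 hi)).2.symm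
  · exact hP.eq_of_mem_of_mem (hg i (Finset.mem_Iic.1 hi)).1 (h ▸ (hg i' (Finset.mem_Iic.1 hi')).1)

theorem le_maxDegree [Fintype V] [DecidableRel G.Adj] (hP : TTPartition G k P) :
    k ≤ G.maxDegree := by
  cases k with
  | zero => exact Nat.zero_le _
  | succ m =>
    obtain ⟨v, hv⟩ := hP.1 (Fin.last m)
    exact (hP.le_degree_of_mem hv).trans (G.degree_le_maxDegree v)

end TTPartition

theorem stmt0_general {V : Type*} [Fintype V] (G : SimpleGraph V) [DecidableRel G.Adj]
    (k : ℕ) (P : Fin k → Set V) (hP : TTPartition G k P) :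
    k ≤ min G.maxDegree (Fintype.card V / 2) :=
  le_min hP.le_maxDegree ((Nat.le_div_iff_mul_le two_pos).2 hP.mul_two_le_card)

/-- The total transitivity of a finite graph with no isolated vertices is at most
`min (Δ(G)) ⌊n/2⌋`. -/
theorem stmt0 {V : Type*} [Fintype V] (G : SimpleGraph V) [DecidableRel G.Adj]
    (hiso : ∀ v : V, ∃ u : V, G.Adj v u)
    (k : ℕ) (P : Fin k → Set V) (hP : TTPartition G k P) :
    k ≤ min G.maxDegree (Fintype.card V / 2) :=
  stmt0_general G k P hP
end

section
/- For the complete graph K_n on n ≥ 2 vertices, the total transitivity satisfies Tr_t(K_n) = ⌊n/2⌋. -/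
/-!
Every part of a total transitive partition dominates itself, so it contains two adjacent
vertices; hence `2k ≤ n`, i.e. `Tr_t(G) ≤ ⌊n/2⌋` for every graph on `n` vertices. In `K_n` any
part with two vertices dominates every vertex, so cutting `Fin n` into `⌊n/2⌋` blocks of
consecutive vertices, each of size at least two, attains the bound.
-/

open Finset

namespace TTPartition

variable {V : Type*} {G : SimpleGraph V} {k : ℕ} {P : Fin k → Set V}

theorem nontrivial (h : TTPartition G k P) (i : Fin k) : (P i).Nontrivial := by
  obtain ⟨v, hv⟩ := h.1 i
  obtain ⟨u, hu, huv⟩ := h.2.2 i i le_rfl v hv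
  exact ⟨u, hu, v, hv, huv.ne⟩

theorem two_mul_le_card [Fintype V] (h : TTPartition G k P) : 2 * k ≤ Fintype.card V := by
  classical
  choose part _ part_unique using h.2.1
  have two_le_fiber : ∀ i, 2 ≤ #{v | part v = i} := fun i => by
    obtain ⟨u, hu, v, hv, huv⟩ := h.nontrivial i
    exact one_lt_card.2
      ⟨u, by simp [part_unique u i hu], v, by simp [part_unique v i hv], huv⟩
  calc 2 * k = ∑ _i : Fin k, 2 := by simp [mul_comm]
    _ ≤ ∑ i, #{v | part v = i} := sum_le_sum fun i _ => two_le_fiber i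
    _ = Fintype.card V := (card_eq_sum_card_fiberwise fun v _ => mem_univ (part v)).symm

end TTPartition

theorem ttPartition_top_fibers {V : Type*} {k : ℕ} (f : V → Fin k)
    (hf : ∀ i, (f ⁻¹' {i}).Nontrivial) :
    TTPartition (⊤ : SimpleGraph V) k fun i => f ⁻¹' {i} := by
  refine ⟨fun i => (hf i).nonempty, fun v => ⟨f v, rfl, fun i hi => hi.symm⟩, ?_⟩
  intro i _ _ v _
  obtain ⟨u, hu, huv⟩ := (hf i).exists_ne v
  exact ⟨u, hu, huv⟩

/-- Blocks of two consecutive vertices; the leftover vertices join the last block. -/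
def pairBlock (n k : ℕ) (hk : 0 < k) (v : Fin n) : Fin k :=
  ⟨min (v / 2) (k - 1), by omega⟩

theorem pairBlock_fiber_nontrivial {n k : ℕ} (hk : 0 < k) (hkn : 2 * k ≤ n) (i : Fin k) :
    (pairBlock n k hk ⁻¹' {i}).Nontrivial := by
  have := i.isLt
  refine ⟨⟨2 * i, by omega⟩, ?_, ⟨2 * i + 1, by omega⟩, ?_, ?_⟩ <;>
    simp [pairBlock, Fin.ext_iff] <;> omega

/-- The total transitivity of the complete graph `K_n` (for `n ≥ 2`) equals `⌊n/2⌋`. -/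
theorem stmt1 (n : ℕ) (hn : 2 ≤ n) :
    IsGreatest {k : ℕ | ∃ P : Fin k → Set (Fin n),
      TTPartition (⊤ : SimpleGraph (Fin n)) k P} (n / 2) := by
  have hk : 0 < n / 2 := by omega
  refine ⟨⟨_, ttPartition_top_fibers (pairBlock n (n / 2) hk)
    (pairBlock_fiber_nontrivial hk (Nat.mul_div_le n 2))⟩, ?_⟩
  rintro k ⟨P, hP⟩
  have h2k : 2 * k ≤ n := by simpa using hP.two_mul_le_card
  omega
end

section
/- Let G be a connected graph with Tr_t(G) = k, where k ≥ 2. Then there exists a total transitive partition {V_1, V_2, ..., V_k} of G of size k such that |V_k| = 2. -/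
section

open Function

variable {V : Type*} (G : SimpleGraph V)

/-- The colouring form of a total transitive partition: `v` lies in the part `f v`. -/
def IsTTColoring {k : ℕ} (f : V → Fin k) : Prop :=
  Surjective f ∧ ∀ v, ∀ i ≤ f v, ∃ u, f u = i ∧ G.Adj u v

variable {G}

theorem TTPartition.exists_isTTColoring {k : ℕ} {P : Fin k → Set V} (hP : TTPartition G k P) :
    ∃ f : V → Fin k, IsTTColoring G f := by
  obtain ⟨hne, huniq, hdom⟩ := hP
  choose f hf huniq using huniq
  refine ⟨f, fun i => ?_, fun v i hi => ?_⟩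
  · obtain ⟨v, hv⟩ := hne i
    exact ⟨v, (huniq v i hv).symm⟩
  · obtain ⟨u, hu, huv⟩ := hdom i (f v) hi v (hf v)
    exact ⟨u, (huniq u i hu).symm, huv⟩

theorem IsTTColoring.ttPartition {k : ℕ} {f : V → Fin k} (hf : IsTTColoring G f) :
    TTPartition G k fun i => f ⁻¹' {i} := by
  refine ⟨fun i => hf.1 i, fun v => ⟨f v, rfl, fun i hi => hi.symm⟩, ?_⟩
  rintro i j hij v rfl
  exact hf.2 v i hij

variable {n : ℕ} {f : V → Fin (n + 2)}

section Shrink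

variable [DecidableEq V] {u v w : V}

def shrinkLast (f : V → Fin (n + 2)) (u v : V) : V → Fin (n + 2) :=
  fun w => if w = u ∨ w = v then Fin.last _ else if f w = Fin.last _ then 0 else f w

theorem shrinkLast_eq_last_iff : shrinkLast f u v w = Fin.last _ ↔ w = u ∨ w = v := by
  unfold shrinkLast
  split_ifs <;> simp_all [Fin.ext_iff]

theorem shrinkLast_le (hw : ¬(w = u ∨ w = v)) : shrinkLast f u v w ≤ f w := by
  unfold shrinkLast
  split_ifs <;> simp

theorem shrinkLast_of_ne_last (hu : f u = Fin.last _) (hv : f v = Fin.last _)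
    (hw : f w ≠ Fin.last _) : shrinkLast f u v w = f w := by
  have : ¬(w = u ∨ w = v) := by rintro (rfl | rfl) <;> contradiction
  simp only [shrinkLast, if_neg this, if_neg hw]

theorem isTTColoring_shrinkLast (hf : IsTTColoring G f) (hu : f u = Fin.last _)
    (hv : f v = Fin.last _) (huv : G.Adj u v) : IsTTColoring G (shrinkLast f u v) := by
  refine ⟨fun i => ?_, fun w i hi => ?_⟩
  · by_cases hi : i = Fin.last _
    · exact ⟨u, shrinkLast_eq_last_iff.2 (.inl rfl) |>.trans hi.symm⟩
    · obtain ⟨w, rfl⟩ := hf.1 i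
      exact ⟨w, shrinkLast_of_ne_last hu hv hi⟩
  by_cases hi_last : i = Fin.last _
  · -- then `w` is `u` or `v`, and is dominated by the other end of the edge `uv`
    subst hi_last
    have hw := shrinkLast_eq_last_iff.1 (Fin.last_le_iff.1 hi)
    rcases hw with rfl | rfl
    · exact ⟨v, shrinkLast_eq_last_iff.2 (.inr rfl), huv.symm⟩
    · exact ⟨u, shrinkLast_eq_last_iff.2 (.inl rfl), huv⟩
  have hle : i ≤ f w := by
    by_cases hw : w = u ∨ w = v
    · rcases hw with rfl | rfl
      · exact hu ▸ Fin.le_last i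
      · exact hv ▸ Fin.le_last i
    · exact hi.trans (shrinkLast_le hw)
  obtain ⟨x, rfl, hxw⟩ := hf.2 w i hle
  exact ⟨x, shrinkLast_of_ne_last hu hv hi_last, hxw⟩

end Shrink

theorem IsTTColoring.exists_ncard_preimage_last_eq_two (hf : IsTTColoring G f) :
    ∃ g : V → Fin (n + 2), IsTTColoring G g ∧ (g ⁻¹' {Fin.last _}).ncard = 2 := by
  classical
  obtain ⟨v, hv⟩ := hf.1 (Fin.last _)
  obtain ⟨u, hu, huv⟩ := hf.2 v (Fin.last _) hv.ge
  refine ⟨shrinkLast f u v, isTTColoring_shrinkLast hf hu hv huv, ?_⟩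
  have : shrinkLast f u v ⁻¹' {Fin.last _} = {u, v} := by
    ext w
    exact shrinkLast_eq_last_iff
  rw [this, Set.ncard_pair (G.ne_of_adj huv)]

end

/-- If `G` is a connected graph with total transitivity `k ≥ 2`, then there is a total
transitive partition `{V_1, …, V_k}` of `G` with `|V_k| = 2`. -/
theorem stmt7 {V : Type*} (G : SimpleGraph V)
    (k : ℕ) (hk : 2 ≤ k)
    (hTrt : IsGreatest {m : ℕ | ∃ P : Fin m → Set V, TTPartition G m P} k) :
    ∃ P : Fin k → Set V, TTPartition G k P ∧ (P ⟨k - 1, by omega⟩).ncard = 2 := by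
  obtain ⟨P, hP⟩ := hTrt.1
  obtain ⟨n, rfl⟩ : ∃ n, k = n + 2 := ⟨k - 2, by omega⟩
  obtain ⟨f, hf⟩ := hP.exists_isTTColoring
  obtain ⟨g, hg, hcard⟩ := hf.exists_ncard_preimage_last_eq_two
  exact ⟨_, hg.ttPartition, hcard⟩
end

section
/- Let G = (S ∪ K, E) be a split graph where S is an independent set, K is a clique, |S| = |K|, and the edges between S and K form a perfect matching (each vertex of S is adjacent to exactly one vertex of K and each vertex of K is adjacent to exactly one vertex of S). Then Tr_t(G) = 1. -/
namespace TTPartition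

variable {V : Type*} {G : SimpleGraph V} {k : ℕ} {P : Fin k → Set V}

theorem mem_of_forall_adj_eq (hP : TTPartition G k P) {v w : V} {i j : Fin k} (hij : i ≤ j)
    (hv : v ∈ P j) (hw : ∀ u, G.Adj u v → u = w) : w ∈ P i := by
  obtain ⟨u, hu, huv⟩ := hP.2.2 i j hij v hv
  exact hw u huv ▸ hu

theorem eq_of_le_of_existsUnique_adj (hP : TTPartition G k P) {v : V} {i j : Fin k}
    (hij : i ≤ j) (hv : v ∈ P j) (hleaf : ∃! w, G.Adj v w) : i = j := by
  obtain ⟨w, -, hw⟩ := hleaf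
  have hw' : ∀ u, G.Adj u v → u = w := fun u huv => hw u huv.symm
  exact hP.eq_of_mem_of_mem (hP.mem_of_forall_adj_eq hij hv hw')
    (hP.mem_of_forall_adj_eq le_rfl hv hw')

theorem le_one (hP : TTPartition G k P)
    (hleaves : ∀ v, (∃! w, G.Adj v w) ∨ ∃ s, G.Adj v s ∧ ∃! w, G.Adj s w) : k ≤ 1 := by
  by_contra! hk
  let first : Fin k := ⟨0, by omega⟩
  have mem_first_of_leaf : ∀ s, (∃! w, G.Adj s w) → s ∈ P first := by
    intro s hs
    obtain ⟨j, hj, -⟩ := hP.2.1 s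
    have hfj : first = j :=
      hP.eq_of_le_of_existsUnique_adj (Fin.le_def.mpr (Nat.zero_le _)) hj hs
    exact hfj ▸ hj
  have mem_first : ∀ v, v ∈ P first := by
    intro v
    rcases hleaves v with hv | ⟨s, hvs, hs⟩
    · exact mem_first_of_leaf v hv
    · exact hP.mem_of_forall_adj_eq le_rfl (mem_first_of_leaf s hs)
        fun u hus => hs.unique hus.symm hvs.symm
  obtain ⟨v, hv⟩ := hP.1 ⟨1, hk⟩
  have h01 := hP.eq_of_mem_of_mem (mem_first v) hv
  simp [first, Fin.ext_iff] at h01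

end TTPartition

theorem ttPartition_one_univ {V : Type*} [Nonempty V] {G : SimpleGraph V}
    (hadj : ∀ v, ∃ u, G.Adj v u) : TTPartition G 1 fun _ => Set.univ := by
  refine ⟨fun _ => Set.univ_nonempty, fun v => ⟨0, trivial, fun i _ => Subsingleton.elim i 0⟩,
    fun _ _ _ v _ => ?_⟩
  obtain ⟨u, hu⟩ := hadj v
  exact ⟨u, trivial, hu.symm⟩

theorem existsUnique_adj_of_mem_indep {V : Type*} {G : SimpleGraph V} {S K : Set V}
    (hcover : S ∪ K = Set.univ) (hS : ∀ u ∈ S, ∀ v ∈ S, ¬ G.Adj u v)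
    (hmatchS : ∀ s ∈ S, ∃! t : V, t ∈ K ∧ G.Adj s t) {s : V} (hs : s ∈ S) :
    ∃! w, G.Adj s w := by
  obtain ⟨t, ht, htu⟩ := hmatchS s hs
  refine ⟨t, ht.2, fun w hw => htu w ⟨?_, hw⟩⟩
  have hwSK : w ∈ S ∪ K := hcover ▸ Set.mem_univ w
  exact hwSK.resolve_left fun hwS => hS s hs w hwS hw

theorem stmt9_general {V : Type*} [Nonempty V] (G : SimpleGraph V)
    (S K : Set V) (hcover : S ∪ K = Set.univ)
    (hS : ∀ u ∈ S, ∀ v ∈ S, ¬ G.Adj u v)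
    (hmatchS : ∀ s ∈ S, ∃! t : V, t ∈ K ∧ G.Adj s t)
    (hmatchK : ∀ t ∈ K, ∃! s : V, s ∈ S ∧ G.Adj t s)
    (hiso : ∀ v : V, ∃ u : V, G.Adj v u) :
    IsGreatest {k : ℕ | ∃ P : Fin k → Set V, TTPartition G k P} 1 := by
  have hleaf : ∀ s ∈ S, ∃! w, G.Adj s w :=
    fun s hs => existsUnique_adj_of_mem_indep hcover hS hmatchS hs
  have hleaves : ∀ v, (∃! w, G.Adj v w) ∨ ∃ s, G.Adj v s ∧ ∃! w, G.Adj s w := by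
    intro v
    have hvSK : v ∈ S ∪ K := hcover ▸ Set.mem_univ v
    rcases hvSK with hvS | hvK
    · exact Or.inl (hleaf v hvS)
    · obtain ⟨s, ⟨hsS, hvs⟩, -⟩ := hmatchK v hvK
      exact Or.inr ⟨s, hvs, hleaf s hsS⟩
  exact ⟨⟨_, ttPartition_one_univ hiso⟩, fun k ⟨_, hP⟩ => hP.le_one hleaves⟩

/-- Let `G` be a split graph whose vertices are partitioned into an independent set `S`
and a clique `K` with `|S| = |K|`, where the edges between `S` and `K` form a perfect
matching. Then the total transitivity of `G` is `1`. -/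
theorem stmt9 {V : Type*} [Fintype V] [Nonempty V] (G : SimpleGraph V)
    (S K : Set V) (hdisj : Disjoint S K) (hcover : S ∪ K = Set.univ)
    (hS : ∀ u ∈ S, ∀ v ∈ S, ¬ G.Adj u v)
    (hK : G.IsClique K)
    (hcard : S.ncard = K.ncard)
    (hmatchS : ∀ s ∈ S, ∃! t : V, t ∈ K ∧ G.Adj s t)
    (hmatchK : ∀ t ∈ K, ∃! s : V, s ∈ S ∧ G.Adj t s)
    (hiso : ∀ v : V, ∃ u : V, G.Adj v u) :
    IsGreatest {k : ℕ | ∃ P : Fin k → Set V, TTPartition G k P} 1 :=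
  stmt9_general G S K hcover hS hmatchS hmatchK hiso
end

section
/- Let T be a total complete minimum broadcast tree of order k (tcmbt_k). Then Tr_t(T) = k and Tr(T) = k + 1. -/
/-- A transitive partition of `G` into `k` parts: the parts are nonempty, they partition
the vertex set, and `V_i` dominates `V_j` for all `i < j`. -/
def TrPartition {V : Type*} (G : SimpleGraph V) (k : ℕ) (P : Fin k → Set V) : Prop :=
  (∀ i, (P i).Nonempty) ∧
  (∀ v : V, ∃! i, v ∈ P i) ∧
  (∀ i j : Fin k, i < j → ∀ v ∈ P j, ∃ u ∈ P i, G.Adj u v)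

/-- Vertices of the total complete minimum broadcast tree `tcmbt_k` are encoded as a
descent path together with a flag (`false` = the root of the current sub-`tcmbt`,
`true` = the distinguished child `v_m` of that root).  A descent step `(b, i)` from a
sub-`tcmbt` of order `m` moves to the root of the copy of `tcmbt_{i+1}` (with
`i + 1 ≤ m - 1`) hanging from the root (if `b = false`) or from the distinguished
child (if `b = true`).  `validT m L` says the descent path `L` is valid starting from
order `m`. -/
def validT : ℕ → List (Bool × ℕ) → Prop
  | _, [] => True
  | m, p :: rest => p.2 + 2 ≤ m ∧ validT (p.2 + 1) rest

/-- The vertex set of `tcmbt_k`. -/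
def TcmbtVert (k : ℕ) : Type := {p : List (Bool × ℕ) × Bool // validT k p.1}

/-- The total complete minimum broadcast tree of order `k`: at each descent path `L`,
the root `(L, false)` is adjacent to its distinguished child `(L, true)`; the root is
adjacent to the roots `(L ++ [(false, i)], false)` of the copies of `tcmbt_{i+1}`
hanging from it, and the distinguished child is adjacent to the roots
`(L ++ [(true, i)], false)` of the copies of `tcmbt_{i+1}` hanging from it. -/
def tcmbt (k : ℕ) : SimpleGraph (TcmbtVert k) :=
  SimpleGraph.fromRel (fun u v =>
    (u.val.1 = v.val.1 ∧ u.val.2 = false ∧ v.val.2 = true) ∨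
    (∃ i : ℕ, v.val.1 = u.val.1 ++ [(u.val.2, i)] ∧ v.val.2 = false))

namespace Aux10

@[simp] lemma validT_nil {k : ℕ} : validT k [] ↔ True := Iff.rfl
@[simp] lemma validT_cons {k : ℕ} {p : Bool × ℕ} {rest : List (Bool × ℕ)} :
    validT k (p :: rest) ↔ p.2 + 2 ≤ k ∧ validT (p.2 + 1) rest := Iff.rfl

def ordL : ℕ → List (Bool × ℕ) → ℕ
  | m, [] => m
  | _, p :: rest => ordL (p.2 + 1) rest

lemma ordL_append : ∀ (k : ℕ) (L : List (Bool × ℕ)) (b : Bool) (i : ℕ),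
    ordL k (L ++ [(b, i)]) = i + 1
  | _, [], _, _ => rfl
  | _, p :: rest, b, i => ordL_append (p.2 + 1) rest b i

lemma one_le_ordL : ∀ (k : ℕ) (L : List (Bool × ℕ)), 1 ≤ k → 1 ≤ ordL k L
  | _, [], hk => hk
  | _, p :: rest, _ => one_le_ordL (p.2 + 1) rest (by omega)

lemma ordL_le : ∀ (k : ℕ) (L : List (Bool × ℕ)), validT k L → ordL k L ≤ k
  | k, [], _ => le_refl k
  | k, p :: rest, h => le_trans (ordL_le (p.2 + 1) rest h.2) (by have := h.1; omega)

lemma ordL_lt (k : ℕ) (p : Bool × ℕ) (rest : List (Bool × ℕ)) (h : validT k (p :: rest)) :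
    ordL k (p :: rest) < k :=
  lt_of_le_of_lt (ordL_le (p.2 + 1) rest h.2) (by have := h.1; omega)

lemma validT_append {k : ℕ} {L : List (Bool × ℕ)} {b : Bool} {i : ℕ} :
    validT k (L ++ [(b, i)]) ↔ validT k L ∧ i + 2 ≤ ordL k L := by
  induction L generalizing k with
  | nil => simp [ordL]
  | cons p rest ih =>
      simp only [List.cons_append, validT_cons, ih, ordL]
      tauto

lemma append_single_inj {α : Type*} {L1 L2 : List α} {x y : α} (h : L1 ++ [x] = L2 ++ [y]) :
    L1 = L2 ∧ x = y := by
  have h2 := List.append_inj' h rfl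
  refine ⟨h2.1, ?_⟩
  simpa using h2.2

lemma adj_flip {k : ℕ} {L : List (Bool × ℕ)} (hv : validT k L) (b : Bool) :
    (tcmbt k).Adj ⟨(L, b), hv⟩ ⟨(L, !b), hv⟩ := by
  rw [tcmbt]; apply (SimpleGraph.fromRel_adj ..).mpr
  refine ⟨?_, ?_⟩
  · intro h
    have := congrArg (fun x => x.val.2) h
    simp at this
  · cases b
    · exact Or.inl (Or.inl ⟨rfl, rfl, rfl⟩)
    · exact Or.inr (Or.inl ⟨rfl, rfl, rfl⟩)

lemma adj_child {k : ℕ} {L : List (Bool × ℕ)} {b : Bool} {i : ℕ}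
    (hv : validT k L) (h2 : validT k (L ++ [(b, i)])) :
    (tcmbt k).Adj ⟨(L, b), hv⟩ ⟨(L ++ [(b, i)], false), h2⟩ := by
  rw [tcmbt]; apply (SimpleGraph.fromRel_adj ..).mpr
  refine ⟨?_, Or.inl (Or.inr ⟨i, rfl, rfl⟩)⟩
  intro h
  have := congrArg (fun x => x.val.1.length) h
  simp at this

lemma adj_cases {k : ℕ} {u v : TcmbtVert k} (h : (tcmbt k).Adj u v) :
    (v.val.1 = u.val.1 ∧ v.val.2 = !u.val.2) ∨
    (∃ i, v.val.1 = u.val.1 ++ [(u.val.2, i)] ∧ v.val.2 = false) ∨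
    (∃ i, u.val.1 = v.val.1 ++ [(v.val.2, i)] ∧ u.val.2 = false) := by
  rw [tcmbt, SimpleGraph.fromRel_adj] at h
  obtain ⟨-, h | h⟩ := h
  · rcases h with ⟨h1, h2, h3⟩ | ⟨i, h1, h2⟩
    · exact Or.inl ⟨h1.symm, by simp [h2, h3]⟩
    · exact Or.inr (Or.inl ⟨i, h1, h2⟩)
  · rcases h with ⟨h1, h2, h3⟩ | ⟨i, h1, h2⟩
    · exact Or.inl ⟨h1, by simp [h2, h3]⟩
    · exact Or.inr (Or.inr ⟨i, h1, h2⟩)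

lemma neighbor_cases {k : ℕ} {L : List (Bool × ℕ)} {b : Bool} {hv : validT k L}
    {w : TcmbtVert k} (h : (tcmbt k).Adj w ⟨(L, b), hv⟩) :
    w = ⟨(L, !b), hv⟩ ∨
    (∃ i, ∃ h2 : validT k (L ++ [(b, i)]), w = ⟨(L ++ [(b, i)], false), h2⟩) ∨
    (∃ M bM i, ∃ hM : validT k M, L = M ++ [(bM, i)] ∧ b = false ∧ w = ⟨(M, bM), hM⟩) := by
  obtain ⟨⟨Lw, bw⟩, hw⟩ := w
  rcases adj_cases h with ⟨h1, h2⟩ | ⟨i, h1, h2⟩ | ⟨i, h1, h2⟩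
  · left
    simp only at h1 h2
    refine Subtype.ext ?_
    simp [h1, h2]
  · right; right
    simp only at h1 h2
    exact ⟨Lw, bw, i, hw, h1, h2, rfl⟩
  · right; left
    simp only at h1 h2
    subst h1 h2
    exact ⟨i, hw, rfl⟩


lemma child_pigeon {k n : ℕ} (hn : 1 ≤ n) (cn : TcmbtVert k → ℕ) {L : List (Bool × ℕ)}
    {bb : Bool} (hord : ordL k L = n)
    (H : ∀ t, t < n → ∃ i, ∃ h2 : validT k (L ++ [(bb, i)]),
        cn ⟨(L ++ [(bb, i)], false), h2⟩ = t) : False := by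
  classical
  have hex : ∀ t : ℕ, ∃ i : ℕ, t < n → ∃ h2 : validT k (L ++ [(bb, i)]),
      cn ⟨(L ++ [(bb, i)], false), h2⟩ = t := by
    intro t
    by_cases ht : t < n
    · obtain ⟨i, hi⟩ := H t ht
      exact ⟨i, fun _ => hi⟩
    · exact ⟨0, fun h => absurd h ht⟩
  choose f hf using hex
  have hmaps : ∀ t ∈ Finset.range n, f t ∈ Finset.range (n - 1) := by
    intro t ht
    simp only [Finset.mem_range] at ht ⊢
    obtain ⟨h2, -⟩ := hf t ht
    have := (validT_append.mp h2).2
    omega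
  have hcard : (Finset.range (n - 1)).card < (Finset.range n).card := by
    simp only [Finset.card_range]; omega
  obtain ⟨t1, ht1, t2, ht2, hne, heq⟩ :=
    Finset.exists_ne_map_eq_of_card_lt_of_maps_to hcard hmaps
  simp only [Finset.mem_range] at ht1 ht2
  obtain ⟨h21, hc1⟩ := hf t1 ht1
  obtain ⟨h22, hc2⟩ := hf t2 ht2
  apply hne
  have hveq : (⟨(L ++ [(bb, f t1)], false), h21⟩ : TcmbtVert k)
      = ⟨(L ++ [(bb, f t2)], false), h22⟩ :=
    Subtype.ext (show (L ++ [(bb, f t1)], false) = (L ++ [(bb, f t2)], false) by rw [heq])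
  rw [← hc1, ← hc2, hveq]

lemma total_key {k : ℕ} (hk : 1 ≤ k) (cn : TcmbtVert k → ℕ)
    (hdom : ∀ v t, t ≤ cn v → ∃ u, (tcmbt k).Adj u v ∧ cn u = t) :
    ∀ n (L : List (Bool × ℕ)) (hv : validT k L), ordL k L = n →
      ∀ b, cn ⟨(L, b), hv⟩ < n := by
  intro n
  induction n using Nat.strong_induction_on with
  | _ n IH =>
  intro L hv hord
  have hn : 1 ≤ n := hord ▸ one_le_ordL k L hk
  have hchild : ∀ (b : Bool) (i : ℕ) (h2 : validT k (L ++ [(b, i)])) (bb : Bool),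
      cn ⟨(L ++ [(b, i)], bb), h2⟩ < n - 1 ∧ i + 2 ≤ n := by
    intro b i h2 bb
    have hle := (validT_append.mp h2).2
    have hb := IH (i + 1) (by omega) (L ++ [(b, i)]) h2 (ordL_append k L b i) bb
    omega
  have hd : cn ⟨(L, true), hv⟩ < n := by
    by_contra hcon
    push_neg at hcon
    obtain ⟨u1, ha1, hc1⟩ := hdom ⟨(L, true), hv⟩ (n - 1) (by omega)
    obtain ⟨u2, ha2, hc2⟩ := hdom ⟨(L, true), hv⟩ n (by omega)
    have e1 : u1 = ⟨(L, false), hv⟩ := by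
      rcases neighbor_cases ha1 with h | ⟨i, h2, rfl⟩ | ⟨M, bM, i, hM, hL, hb, hw⟩
      · simpa using h
      · have := (hchild true i h2 false).1; omega
      · simp at hb
    have e2 : u2 = ⟨(L, false), hv⟩ := by
      rcases neighbor_cases ha2 with h | ⟨i, h2, rfl⟩ | ⟨M, bM, i, hM, hL, hb, hw⟩
      · simpa using h
      · have := (hchild true i h2 false).1; omega
      · simp at hb
    rw [e1] at hc1
    rw [e2] at hc2
    omega
  have hx : cn ⟨(L, false), hv⟩ < n := by
    by_contra hcon
    push_neg at hcon
    obtain ⟨u2, ha2, hc2⟩ := hdom ⟨(L, false), hv⟩ n (by omega)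
    obtain ⟨u1, ha1, hc1⟩ := hdom ⟨(L, false), hv⟩ (n - 1) (by omega)
    rcases neighbor_cases ha2 with h | ⟨i, h2, rfl⟩ | ⟨M2, bM2, i2, hM2, hL2, -, rfl⟩
    · simp only [Bool.not_false] at h
      rw [h] at hc2
      omega
    · have := (hchild false i h2 false).1; omega
    · rcases neighbor_cases ha1 with h | ⟨i, h2, rfl⟩ | ⟨M1, bM1, i1, hM1, hL1, -, rfl⟩
      · -- u1 = d with cn d = n - 1 : query d at n - 1
        simp only [Bool.not_false] at h
        rw [h] at hc1
        obtain ⟨w, haw, hcw⟩ := hdom ⟨(L, true), hv⟩ (n - 1) (by omega)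
        rcases neighbor_cases haw with hww | ⟨j, hj2, rfl⟩ | ⟨M, bM, j, hM, hL, hb, hw⟩
        · simp only [Bool.not_true] at hww
          rw [hww] at hcw
          omega
        · have := (hchild true j hj2 false).1; omega
        · simp at hb
      · have := (hchild false i h2 false).1; omega
      · obtain ⟨hMe, hpe⟩ := append_single_inj (hL1.symm.trans hL2)
        have hbe : bM1 = bM2 := ((Prod.mk.injEq _ _ _ _).mp hpe).1
        have hue : (⟨(M1, bM1), hM1⟩ : TcmbtVert k) = ⟨(M2, bM2), hM2⟩ :=
          Subtype.ext (show (M1, bM1) = (M2, bM2) by rw [hMe, hbe])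
        rw [hue] at hc1
        omega
  intro b
  cases b
  · exact hx
  · exact hd


lemma trans_key {k : ℕ} (hk : 1 ≤ k) (cn : TcmbtVert k → ℕ)
    (hdom : ∀ v t, t < cn v → ∃ u, (tcmbt k).Adj u v ∧ cn u = t) :
    ∀ n (L : List (Bool × ℕ)) (hv : validT k L), ordL k L = n →
      cn ⟨(L, true), hv⟩ ≤ n ∧
      (cn ⟨(L, true), hv⟩ = n → cn ⟨(L, false), hv⟩ < n) ∧
      cn ⟨(L, false), hv⟩ ≤ n + 1 ∧
      (cn ⟨(L, false), hv⟩ = n + 1 →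
        ∃ (M : List (Bool × ℕ)) (bM : Bool) (i : ℕ) (hM : validT k M),
          L = M ++ [(bM, i)] ∧ cn ⟨(M, bM), hM⟩ = n) := by
  intro n
  induction n using Nat.strong_induction_on with
  | _ n IH =>
  intro L hv hord
  have hn : 1 ≤ n := hord ▸ one_le_ordL k L hk
  -- bounds on roots of copies hanging below (L, b)
  have hchild : ∀ (b : Bool) (i : ℕ) (h2 : validT k (L ++ [(b, i)])),
      cn ⟨(L ++ [(b, i)], false), h2⟩ ≤ i + 2 ∧
      (cn ⟨(L ++ [(b, i)], false), h2⟩ = i + 2 → cn ⟨(L, b), hv⟩ = i + 1) ∧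
      i + 2 ≤ n := by
    intro b i h2
    have hle : i + 2 ≤ n := by
      have := (validT_append.mp h2).2; omega
    obtain ⟨-, -, hA, hB⟩ := IH (i + 1) (by omega) (L ++ [(b, i)]) h2 (ordL_append k L b i)
    refine ⟨hA, ?_, hle⟩
    intro hEq
    obtain ⟨M, bM, j, hM, hLM, hcnM⟩ := hB hEq
    obtain ⟨hM1, hM2⟩ := append_single_inj hLM
    have hbe : bM = b := (((Prod.mk.injEq _ _ _ _).mp hM2).1).symm
    have hue : (⟨(M, bM), hM⟩ : TcmbtVert k) = ⟨(L, b), hv⟩ :=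
      Subtype.ext (show (M, bM) = (L, b) by rw [← hM1, hbe])
    rw [← hue]
    exact hcnM
  have hC : cn ⟨(L, true), hv⟩ ≤ n := by
    by_contra hcon
    push_neg at hcon
    -- children of (L, true) have cn ≤ i + 1
    have hsmall : ∀ (i : ℕ) (h2 : validT k (L ++ [(true, i)])),
        cn ⟨(L ++ [(true, i)], false), h2⟩ ≤ i + 1 := by
      intro i h2
      obtain ⟨hA, hB, hle⟩ := hchild true i h2
      by_contra hc2
      push_neg at hc2
      have := hB (by omega)
      omega
    -- witness at value n must be (L, false)
    obtain ⟨u, hau, hcu⟩ := hdom ⟨(L, true), hv⟩ n (by omega)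
    have hx_n : cn ⟨(L, false), hv⟩ = n := by
      rcases neighbor_cases hau with h | ⟨i, h2, rfl⟩ | ⟨M, bM, i, hM, hL, hb, hw⟩
      · simp only [Bool.not_true] at h
        rw [h] at hcu
        exact hcu
      · have := hsmall i h2
        have := (hchild true i h2).2.2
        omega
      · simp at hb
    -- cn (L,true) must be exactly n + 1
    have hdn : cn ⟨(L, true), hv⟩ = n + 1 := by
      by_contra hne
      obtain ⟨u2, hau2, hcu2⟩ := hdom ⟨(L, true), hv⟩ (n + 1) (by omega)
      rcases neighbor_cases hau2 with h | ⟨i, h2, rfl⟩ | ⟨M, bM, i, hM, hL, hb, hw⟩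
      · simp only [Bool.not_true] at h
        rw [h] at hcu2
        omega
      · have := hsmall i h2
        have := (hchild true i h2).2.2
        omega
      · simp at hb
    -- pigeonhole: values 0..n-1 all witnessed by distinct children
    apply child_pigeon hn cn hord (bb := true)
    intro t ht
    obtain ⟨u, hau', hcu'⟩ := hdom ⟨(L, true), hv⟩ t (by omega)
    rcases neighbor_cases hau' with h | ⟨i, h2, rfl⟩ | ⟨M, bM, i, hM, hL, hb, hw⟩
    · exfalso
      simp only [Bool.not_true] at h
      rw [h] at hcu'
      omega
    · exact ⟨i, h2, hcu'⟩
    · simp at hb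
  have hD : cn ⟨(L, true), hv⟩ = n → cn ⟨(L, false), hv⟩ < n := by
    intro hdn
    by_contra hcon
    push_neg at hcon
    apply child_pigeon hn cn hord (bb := true)
    intro t ht
    obtain ⟨u, hau, hcu⟩ := hdom ⟨(L, true), hv⟩ t (by omega)
    rcases neighbor_cases hau with h | ⟨i, h2, rfl⟩ | ⟨M, bM, i, hM, hL, hb, hw⟩
    · exfalso
      simp only [Bool.not_true] at h
      rw [h] at hcu
      omega
    · exact ⟨i, h2, hcu⟩
    · simp at hb
  have hA : cn ⟨(L, false), hv⟩ ≤ n + 1 := by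
    by_contra hcon
    push_neg at hcon
    obtain ⟨u2, hau2, hcu2⟩ := hdom ⟨(L, false), hv⟩ (n + 1) (by omega)
    rcases neighbor_cases hau2 with h | ⟨i, h2, rfl⟩ | ⟨M2, bM2, i2, hM2, hL2, -, rfl⟩
    · simp only [Bool.not_false] at h
      rw [h] at hcu2
      omega
    · have := (hchild false i h2).1
      have := (hchild false i h2).2.2
      omega
    · -- parent has cn = n + 1; witness at n must also be the parent: contradiction
      obtain ⟨u1, hau1, hcu1⟩ := hdom ⟨(L, false), hv⟩ n (by omega)
      rcases neighbor_cases hau1 with h | ⟨i, h2, rfl⟩ | ⟨M1, bM1, i1, hM1, hL1, -, rfl⟩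
      · simp only [Bool.not_false] at h
        rw [h] at hcu1
        have := hD hcu1
        omega
      · obtain ⟨hA', hB', hle'⟩ := hchild false i h2
        rcases Nat.lt_or_ge (cn ⟨(L ++ [(false, i), ], false), h2⟩) (i + 2) with hlt | hge
        · omega
        · have := hB' (by omega); omega
      · obtain ⟨hMe, hpe⟩ := append_single_inj (hL1.symm.trans hL2)
        have hbe : bM1 = bM2 := ((Prod.mk.injEq _ _ _ _).mp hpe).1
        have hue : (⟨(M1, bM1), hM1⟩ : TcmbtVert k) = ⟨(M2, bM2), hM2⟩ :=
          Subtype.ext (show (M1, bM1) = (M2, bM2) by rw [hMe, hbe])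
        rw [hue] at hcu1
        omega
  have hB : cn ⟨(L, false), hv⟩ = n + 1 →
      ∃ (M : List (Bool × ℕ)) (bM : Bool) (i : ℕ) (hM : validT k M),
        L = M ++ [(bM, i)] ∧ cn ⟨(M, bM), hM⟩ = n := by
    intro hEq
    obtain ⟨u, hau, hcu⟩ := hdom ⟨(L, false), hv⟩ n (by omega)
    rcases neighbor_cases hau with h | ⟨i, h2, rfl⟩ | ⟨M, bM, i, hM, hL, -, rfl⟩
    · exfalso
      simp only [Bool.not_false] at h
      rw [h] at hcu
      have := hD hcu
      omega
    · exfalso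
      obtain ⟨hA', hB', hle'⟩ := hchild false i h2
      rcases Nat.lt_or_ge (cn ⟨(L ++ [(false, i)], false), h2⟩) (i + 2) with hlt | hge
      · omega
      · have := hB' (by omega); omega
    · exact ⟨M, bM, i, hM, hL, hcu⟩
  exact ⟨hC, hD, hA, hB⟩


end Aux10

namespace Aux10

theorem part1 (k : ℕ) (hk : 1 ≤ k) :
    IsGreatest {m : ℕ | ∃ P : Fin m → Set (TcmbtVert k), TTPartition (tcmbt k) m P} k := by
  constructor
  · -- membership: the construction
    refine ⟨fun i => {v : TcmbtVert k | ordL k v.val.1 = i.val + 1}, ?_, ?_, ?_⟩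
    · intro i
      by_cases hik : i.val + 1 = k
      · exact ⟨⟨([], false), trivial⟩, hik.symm⟩
      · have hlt : i.val + 2 ≤ k := by have := i.isLt; omega
        exact ⟨⟨([(false, i.val)], false), ⟨hlt, trivial⟩⟩, rfl⟩
    · intro v
      have h1v : 1 ≤ ordL k v.val.1 := one_le_ordL k v.val.1 hk
      have h2v : ordL k v.val.1 ≤ k := ordL_le k v.val.1 v.prop
      refine ⟨⟨ordL k v.val.1 - 1, by omega⟩, ?_, ?_⟩
      · show ordL k v.val.1 = (ordL k v.val.1 - 1) + 1
        omega
      · intro j hj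
        have hj' : ordL k v.val.1 = j.val + 1 := hj
        apply Fin.ext
        show j.val = ordL k v.val.1 - 1
        omega
    · rintro i j hij ⟨⟨L, b⟩, hvL⟩ hvP
      have hvP' : ordL k L = j.val + 1 := hvP
      rcases Nat.lt_or_ge i.val j.val with hlt | hge
      · have h2 : validT k (L ++ [(b, i.val)]) := validT_append.mpr ⟨hvL, by omega⟩
        refine ⟨⟨(L ++ [(b, i.val)], false), h2⟩, ?_, (adj_child hvL h2).symm⟩
        show ordL k (L ++ [(b, i.val)]) = i.val + 1
        exact ordL_append k L b i.val
      · have hieq : i = j := Fin.ext (le_antisymm (Fin.le_def.mp hij) hge)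
        subst hieq
        exact ⟨⟨(L, !b), hvL⟩, hvP', (adj_flip hvL b).symm⟩
  · -- upper bound
    intro m hm
    obtain ⟨P, hne, hun, hdm⟩ := hm
    rcases Nat.eq_zero_or_pos m with rfl | hm1
    · omega
    classical
    choose c hspec using hun
    have hcmem : ∀ v, v ∈ P (c v) := fun v => (hspec v).1
    have hcu : ∀ v i, v ∈ P i → i = c v := fun v i h => (hspec v).2 i h
    let cn : TcmbtVert k → ℕ := fun v => (c v).val
    have hcnval : ∀ v, cn v = (c v).val := fun _ => rfl
    have hdom : ∀ v t, t ≤ cn v → ∃ u, (tcmbt k).Adj u v ∧ cn u = t := by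
      intro v t ht
      have hlt : t < m := lt_of_le_of_lt ht (c v).isLt
      obtain ⟨u, huP, hadj⟩ := hdm ⟨t, hlt⟩ (c v) (by simpa [Fin.le_def] using ht) v (hcmem v)
      refine ⟨u, hadj, ?_⟩
      have := hcu u ⟨t, hlt⟩ huP
      rw [hcnval u, ← this]
    have hall : ∀ v : TcmbtVert k, cn v + 1 ≤ k := by
      intro v
      obtain ⟨⟨L, b⟩, hvL⟩ := v
      have h1 := total_key hk cn hdom (ordL k L) L hvL rfl b
      have h2 := ordL_le k L hvL
      omega
    obtain ⟨v, hvP⟩ := hne ⟨m - 1, by omega⟩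
    have hcv : cn v = m - 1 := by
      have := hcu v ⟨m - 1, by omega⟩ hvP
      rw [hcnval v, ← this]
    have := hall v
    omega

theorem part2 (k : ℕ) (hk : 1 ≤ k) :
    IsGreatest {m : ℕ | ∃ P : Fin m → Set (TcmbtVert k), TrPartition (tcmbt k) m P}
      (k + 1) := by
  constructor
  · refine ⟨fun i => {v : TcmbtVert k | cond v.val.2 0 (ordL k v.val.1) = i.val}, ?_, ?_, ?_⟩
    · intro i
      rcases Nat.eq_zero_or_pos i.val with hi0 | hi1
      · exact ⟨⟨([], true), trivial⟩, hi0.symm⟩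
      · by_cases hik : i.val = k
        · refine ⟨⟨([], false), trivial⟩, ?_⟩
          show ordL k [] = i.val
          exact hik.symm
        · have hlt : i.val < k := lt_of_le_of_ne (by have := i.isLt; omega) hik
          refine ⟨⟨([(false, i.val - 1)], false), ⟨by omega, trivial⟩⟩, ?_⟩
          show ordL k [(false, i.val - 1)] = i.val
          have : ordL k [(false, i.val - 1)] = (i.val - 1) + 1 := rfl
          omega
    · intro v
      have hgk : cond v.val.2 0 (ordL k v.val.1) ≤ k := by
        obtain ⟨⟨L, b⟩, hvL⟩ := v
        cases b
        · exact ordL_le k L hvL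
        · exact Nat.zero_le k
      refine ⟨⟨cond v.val.2 0 (ordL k v.val.1), by omega⟩, rfl, ?_⟩
      intro j hj
      have hj' : cond v.val.2 0 (ordL k v.val.1) = j.val := hj
      exact Fin.ext hj'.symm
    · rintro i j hij ⟨⟨L, b⟩, hvL⟩ hvP
      have hij' : i.val < j.val := Fin.lt_def.mp hij
      cases b
      · -- flag false : a root, labelled by its order
        have hvP' : ordL k L = j.val := hvP
        rcases Nat.eq_zero_or_pos i.val with hi0 | hi1
        · refine ⟨⟨(L, true), hvL⟩, ?_, (adj_flip hvL false).symm⟩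
          show (0 : ℕ) = i.val
          exact hi0.symm
        · have h2 : validT k (L ++ [(false, i.val - 1)]) :=
            validT_append.mpr ⟨hvL, by omega⟩
          refine ⟨⟨(L ++ [(false, i.val - 1)], false), h2⟩, ?_, (adj_child hvL h2).symm⟩
          show ordL k (L ++ [(false, i.val - 1)]) = i.val
          rw [ordL_append]
          omega
      · -- flag true : label 0, but j > i ≥ 0 contradiction
        have hvP' : (0 : ℕ) = j.val := hvP
        omega
  · intro m hm
    obtain ⟨P, hne, hun, hdm⟩ := hm
    rcases Nat.eq_zero_or_pos m with rfl | hm1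
    · omega
    classical
    choose c hspec using hun
    have hcmem : ∀ v, v ∈ P (c v) := fun v => (hspec v).1
    have hcu : ∀ v i, v ∈ P i → i = c v := fun v i h => (hspec v).2 i h
    let cn : TcmbtVert k → ℕ := fun v => (c v).val
    have hcnval : ∀ v, cn v = (c v).val := fun _ => rfl
    have hdom : ∀ v t, t < cn v → ∃ u, (tcmbt k).Adj u v ∧ cn u = t := by
      intro v t ht
      have hlt : t < m := lt_trans ht (c v).isLt
      obtain ⟨u, huP, hadj⟩ := hdm ⟨t, hlt⟩ (c v) (by simpa [Fin.lt_def] using ht) v (hcmem v)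
      refine ⟨u, hadj, ?_⟩
      have := hcu u ⟨t, hlt⟩ huP
      rw [hcnval u, ← this]
    have hall : ∀ v : TcmbtVert k, cn v ≤ k := by
      intro v
      obtain ⟨⟨L, b⟩, hvL⟩ := v
      obtain ⟨tC, tD, tA, tB⟩ := trans_key hk cn hdom (ordL k L) L hvL rfl
      cases L with
      | nil =>
        have hordk : ordL k ([] : List (Bool × ℕ)) = k := rfl
        cases b
        · rcases Nat.lt_or_ge (cn ⟨([], false), hvL⟩) (ordL k ([] : List (Bool × ℕ)) + 1)
            with h | h
          · omega
          · have hEq : cn ⟨([], false), hvL⟩ = ordL k ([] : List (Bool × ℕ)) + 1 :=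
              le_antisymm tA h
            obtain ⟨M, bM, i, hM, hLM, -⟩ := tB hEq
            exfalso
            simp at hLM
        · omega
      | cons p rest =>
        have hlt := ordL_lt k p rest hvL
        cases b
        · omega
        · omega
    obtain ⟨v, hvP⟩ := hne ⟨m - 1, by omega⟩
    have hcv : cn v = m - 1 := by
      have := hcu v ⟨m - 1, by omega⟩ hvP
      rw [hcnval v, ← this]
    have := hall v
    omega

end Aux10

/-- For the total complete minimum broadcast tree `T = tcmbt_k` (`k ≥ 1`), the total
transitivity is `k` and the transitivity is `k + 1`. -/
theorem stmt10 (k : ℕ) (hk : 1 ≤ k) :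
    IsGreatest {m : ℕ | ∃ P : Fin m → Set (TcmbtVert k), TTPartition (tcmbt k) m P} k ∧
    IsGreatest {m : ℕ | ∃ P : Fin m → Set (TcmbtVert k), TrPartition (tcmbt k) m P}
      (k + 1) := ⟨Aux10.part1 k hk, Aux10.part2 k hk⟩
end

section
/- Let T be a tree (with no isolated vertices), let v be a vertex of T, and suppose ttr(v, T) = t. Then for every i with 1 ≤ i ≤ t, there exists a total transitive partition {V_1, V_2, ..., V_i} of T of size i such that v ∈ V_i. -/
/-!
Merging the parts `V_i, V_{i+1}, …, V_k` of a total transitive partition into one part gives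
a total transitive partition of size `i`: each of `V_1, …, V_{i-1}` dominates all the merged
parts, and the merged part dominates itself because `V_i` does. A vertex of `V_p` with `p ≥ i`
lands in the last part.
-/

def mergeParts {V : Type*} {k i : ℕ} (f : Fin k → Fin i) (P : Fin k → Set V) : Fin i → Set V :=
  fun l => {w | ∃ m, f m = l ∧ w ∈ P m}

theorem TTPartition.coarsen {V : Type*} {G : SimpleGraph V} {k i : ℕ} {P : Fin k → Set V}
    (hP : TTPartition G k P) (f : Fin k → Fin i) (s : Fin i → Fin k)
    (hfs : ∀ a, f (s a) = a) (hs : ∀ a m, a ≤ f m → s a ≤ m) :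
    TTPartition G i (mergeParts f P) := by
  obtain ⟨hne, huniq, hdom⟩ := hP
  refine ⟨fun l => ?_, fun w => ?_, fun a b hab w ⟨m, hmb, hw⟩ => ?_⟩
  · obtain ⟨w, hw⟩ := hne (s l)
    exact ⟨w, s l, hfs l, hw⟩
  · obtain ⟨m, hm, hm_unique⟩ := huniq w
    refine ⟨f m, ⟨m, rfl, hm⟩, fun l ⟨m', hm'l, hm'⟩ => ?_⟩
    rw [← hm'l, hm_unique m' hm']
  · obtain ⟨u, hu, hadj⟩ := hdom (s a) m (hs a m (hmb ▸ hab)) w hw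
    exact ⟨u, ⟨s a, hfs a, hu⟩, hadj⟩

theorem TTPartition.clamp {V : Type*} {G : SimpleGraph V} {k : ℕ} {P : Fin k → Set V}
    (hP : TTPartition G k P) (n : ℕ) (hnk : n < k) :
    TTPartition G (n + 1) (mergeParts (fun m => Fin.clamp m n) P) := by
  refine hP.coarsen _ (Fin.castLE hnk) (fun a => ?_) (fun a m ham => ?_)
  · ext
    simp [Fin.clamp, Nat.le_of_lt_succ a.isLt]
  · simp only [Fin.le_def, Fin.clamp, le_min_iff] at ham
    exact Fin.le_def.mpr ham.1

theorem mem_mergeParts_clamp_last {V : Type*} {k : ℕ} {P : Fin k → Set V} {v : V} {j : Fin k}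
    (hv : v ∈ P j) {n : ℕ} (hnj : n ≤ j) :
    v ∈ mergeParts (fun m => Fin.clamp m n) P (Fin.last n) :=
  ⟨j, Fin.clamp_eq_last _ _ hnj, hv⟩

/-- If `T` is a tree, `v` a vertex of `T`, and the total transitive number of `v` in `T`
is `t` (the largest `p` such that `v ∈ V_p` in some total transitive partition of `T`),
then for every `1 ≤ i ≤ t` there is a total transitive partition `{V_1, …, V_i}` of `T`
of size `i` with `v ∈ V_i`. -/
theorem stmt18 {V : Type*} (T : SimpleGraph V)
    (v : V) (t : ℕ)
    (ht : IsGreatest {p : ℕ | ∃ k : ℕ, ∃ P : Fin k → Set V, TTPartition T k P ∧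
            ∃ i : Fin k, (i : ℕ) + 1 = p ∧ v ∈ P i} t) :
    ∀ i : ℕ, ∀ hi1 : 1 ≤ i, i ≤ t →
      ∃ P : Fin i → Set V, TTPartition T i P ∧ v ∈ P ⟨i - 1, by omega⟩ := by
  intro i hi1 hit
  obtain ⟨n, rfl⟩ : ∃ n, i = n + 1 := ⟨i - 1, by omega⟩
  obtain ⟨⟨k, P, hP, j, hjt, hv⟩, -⟩ := ht
  have hnj : n ≤ j := by omega
  exact ⟨_, TTPartition.clamp hP n (lt_of_le_of_lt hnj j.isLt), mem_mergeParts_clamp_last hv hnj⟩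
end
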